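/- If two bounded operators L₁, L₂ on a Banach space satisfy ‖L_j² e^{sL_j} w‖ ≤ M for all s ∈ [0, τ] (j = 1,2) and L₁ w = L₂ w, then ‖e^{τL₁} w − e^{τL₂} w‖ ≤ M τ². -/

import Mathlib

/-!
The orbit `s ↦ e^{sL} w` has derivative `L e^{sL} w` and second derivative `L² e^{sL} w`, so by
Taylor's formula with a second-order remainder `e^{τL} w = w + τ L w + R` with `‖R‖ ≤ M τ² / 2`.
The first-order terms of the expansions for `L₁` and `L₂` coincide because `L₁ w = L₂ w`, and only
the two remainders survive in the difference.
-/

open Set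

theorem norm_sub_sub_smul_le_of_norm_deriv₂_le {E : Type*} [NormedAddCommGroup E]
    [NormedSpace ℝ E] {f f' f'' : ℝ → E} {a b C : ℝ} (hab : a ≤ b)
    (hf : ∀ t ∈ Icc a b, HasDerivWithinAt f (f' t) (Icc a b) t)
    (hf' : ∀ t ∈ Icc a b, HasDerivWithinAt f' (f'' t) (Icc a b) t)
    (bound : ∀ t ∈ Icc a b, ‖f'' t‖ ≤ C) :
    ‖f b - f a - (b - a) • f' a‖ ≤ C * (b - a) ^ 2 / 2 := by
  set r : ℝ → E := fun t => f t - f a - (t - a) • f' a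
  have hr : ∀ t ∈ Icc a b, HasDerivWithinAt r (f' t - f' a) (Icc a b) t := fun t ht => by
    have := ((hf t ht).sub_const (f a)).sub (((hasDerivAt_id t).sub_const a).smul_const
      (f' a)).hasDerivWithinAt
    rwa [one_smul] at this
  have hr' : ∀ t ∈ Icc a b, ‖f' t - f' a‖ ≤ C * (t - a) :=
    norm_image_sub_le_of_norm_deriv_le_segment' hf' fun t ht => bound t (Ico_subset_Icc_self ht)
  -- `‖r‖` is fenced by the parabola whose derivative `C (t - a)` dominates `‖r'‖`.
  have hB : ∀ t, HasDerivAt (fun t => C * (t - a) ^ 2 / 2) (C * (t - a)) t := fun t => by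
    refine (((((hasDerivAt_id' t).sub_const a).fun_pow 2).const_mul C).div_const 2).congr_deriv ?_
    ring
  refine image_norm_le_of_norm_deriv_right_le_deriv_boundary
    (fun t ht => (hr t ht).continuousWithinAt) (fun t ht => ?_) (by simp [r]) hB
    (fun t ht => hr' t (Ico_subset_Icc_self ht)) (right_mem_Icc.2 hab)
  exact (hr t (Ico_subset_Icc_self ht)).mono_of_mem_nhdsWithin (Icc_mem_nhdsGE_of_mem ht)

theorem hasDerivAt_exp_smul_apply {𝕂 E : Type*} [RCLike 𝕂] [NormedAddCommGroup E]
    [NormedSpace 𝕂 E] [CompleteSpace E] (L : E →L[𝕂] E) (w : E) (t : 𝕂) :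
    HasDerivAt (fun s : 𝕂 => NormedSpace.exp (s • L) w) (L (NormedSpace.exp (t • L) w)) t := by
  simpa [Function.comp_def] using (ContinuousLinearMap.apply 𝕂 E w).hasFDerivAt.comp_hasDerivAt t
    (hasDerivAt_exp_smul_const' L t)

theorem norm_exp_smul_apply_sub_sub_le {E : Type*} [NormedAddCommGroup E] [NormedSpace ℝ E]
    [CompleteSpace E] (L : E →L[ℝ] E) (w : E) {M τ : ℝ} (hτ : 0 ≤ τ)
    (h : ∀ s ∈ Icc (0 : ℝ) τ, ‖(L ∘L L) (NormedSpace.exp (s • L) w)‖ ≤ M) :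
    ‖NormedSpace.exp (τ • L) w - w - τ • L w‖ ≤ M * τ ^ 2 / 2 := by
  have hL : ∀ t : ℝ, HasDerivAt (fun s : ℝ => L (NormedSpace.exp (s • L) w))
      ((L ∘L L) (NormedSpace.exp (t • L) w)) t := fun t =>
    L.hasFDerivAt.comp_hasDerivAt t (hasDerivAt_exp_smul_apply L w t)
  simpa using norm_sub_sub_smul_le_of_norm_deriv₂_le hτ
    (fun t _ => (hasDerivAt_exp_smul_apply L w t).hasDerivWithinAt)
    (fun t _ => (hL t).hasDerivWithinAt) h

/-- One-step consistency estimate: if two bounded operators `L₁, L₂` on a Banach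
space satisfy `‖L_j² e^{sL_j} w‖ ≤ M` for all `s ∈ [0,τ]` (`j = 1,2`) and
`L₁ w = L₂ w`, then `‖e^{τL₁} w − e^{τL₂} w‖ ≤ M τ²`. -/
theorem exp_one_step_consistency {E : Type*} [NormedAddCommGroup E] [NormedSpace ℝ E]
    [CompleteSpace E] (L₁ L₂ : E →L[ℝ] E) (w : E) (M τ : ℝ) (hτ : 0 ≤ τ)
    (h1 : ∀ s ∈ Set.Icc (0:ℝ) τ, ‖(L₁ ∘L L₁) ((NormedSpace.exp (s • L₁)) w)‖ ≤ M)
    (h2 : ∀ s ∈ Set.Icc (0:ℝ) τ, ‖(L₂ ∘L L₂) ((NormedSpace.exp (s • L₂)) w)‖ ≤ M)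
    (hLw : L₁ w = L₂ w) :
    ‖(NormedSpace.exp (τ • L₁)) w - (NormedSpace.exp (τ • L₂)) w‖ ≤ M * τ ^ 2 := by
  calc ‖NormedSpace.exp (τ • L₁) w - NormedSpace.exp (τ • L₂) w‖
      = ‖(NormedSpace.exp (τ • L₁) w - w - τ • L₁ w) -
          (NormedSpace.exp (τ • L₂) w - w - τ • L₂ w)‖ := by
        rw [hLw]; congr 1; abel
    _ ≤ ‖NormedSpace.exp (τ • L₁) w - w - τ • L₁ w‖ +
          ‖NormedSpace.exp (τ • L₂) w - w - τ • L₂ w‖ := norm_sub_le _ _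
    _ ≤ M * τ ^ 2 / 2 + M * τ ^ 2 / 2 :=
        add_le_add (norm_exp_smul_apply_sub_sub_le L₁ w hτ h1)
          (norm_exp_smul_apply_sub_sub_le L₂ w hτ h2)
    _ = M * τ ^ 2 := by ring
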